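/- Under the hypotheses of the previous statement, suppose ℓ₀ := r(0) × r'(0) ≠ 0. Then for all t, the inner product ⟨r(t), ℓ₀⟩ = 0, i.e. the motion takes place in the plane through the origin orthogonal to ℓ₀. -/

import Mathlib

/-- The cross product on `EuclideanSpace ℝ (Fin 3)`. -/
noncomputable def cross3 (a b : EuclideanSpace ℝ (Fin 3)) : EuclideanSpace ℝ (Fin 3) :=
  (WithLp.equiv 2 (Fin 3 → ℝ)).symm
    ![a 1 * b 2 - a 2 * b 1, a 2 * b 0 - a 0 * b 2, a 0 * b 1 - a 1 * b 0]

/-!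
The angular momentum `L = r × r'` satisfies `L' = r' × r' + r × r'' = -2γ L`, since
`r' × r' = 0` and the central force contributes a multiple of `r × r = 0`. Hence `e^{2γt} L(t) = L(0)`, and so
`⟨r(t), L(0)⟩ = e^{2γt} ⟨r(t), r(t) × r'(t)⟩ = 0`.
-/

open Real Matrix

theorem exp_mul_smul_eq_of_hasDerivAt_neg_smul {E : Type*} [NormedAddCommGroup E]
    [NormedSpace ℝ E] {k : ℝ} {L : ℝ → E} (hL : ∀ t, HasDerivAt L (-k • L t) t) (t : ℝ) :
    exp (k * t) • L t = L 0 := by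
  have hderiv : ∀ s, HasDerivAt (fun u ↦ exp (k * u) • L u) 0 s := by
    intro s
    have hexp : HasDerivAt (fun u ↦ exp (k * u)) (exp (k * s) * k) s :=
      ((hasDerivAt_id s).const_mul k).exp.congr_deriv (by simp)
    refine (hexp.smul (hL s)).congr_deriv ?_
    rw [smul_smul, mul_neg, neg_smul, mul_comm, neg_add_cancel]
  simpa using is_const_of_deriv_eq_zero (fun s ↦ (hderiv s).differentiableAt)
    (fun s ↦ (hderiv s).deriv) t 0

section CrossProduct

local notation "ℝ³" => EuclideanSpace ℝ (Fin 3)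

theorem cross3_eq_crossProduct (a b : ℝ³) : cross3 a b = WithLp.toLp 2 (a.ofLp ⨯₃ b.ofLp) :=
  rfl

theorem isBilinearMap_cross3 : IsBilinearMap ℝ cross3 where
  add_left _ _ _ := by simp [cross3_eq_crossProduct]
  smul_left _ _ _ := by simp [cross3_eq_crossProduct]
  add_right _ _ _ := by simp [cross3_eq_crossProduct]
  smul_right _ _ _ := by simp [cross3_eq_crossProduct]

noncomputable def cross3CLM : ℝ³ →L[ℝ] ℝ³ →L[ℝ] ℝ³ :=
  isBilinearMap_cross3.toContinuousBilinearMap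

theorem cross3CLM_apply (a b : ℝ³) : cross3CLM a b = cross3 a b := rfl

theorem cross3_self (a : ℝ³) : cross3 a a = 0 := by
  simp [cross3_eq_crossProduct]

theorem inner_self_cross3 (a b : ℝ³) : inner ℝ a (cross3 a b) = 0 := by
  simp [cross3_eq_crossProduct, EuclideanSpace.inner_eq_star_dotProduct, dotProduct_comm,
    dot_self_cross]

theorem HasDerivAt.cross3 {u v : ℝ → ℝ³} {u' v' : ℝ³} {t : ℝ} (hu : HasDerivAt u u' t)
    (hv : HasDerivAt v v' t) :
    HasDerivAt (fun s ↦ cross3 (u s) (v s)) (cross3 (u t) v' + cross3 u' (v t)) t :=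
  cross3CLM.hasDerivAt_of_bilinear (fun _ ↦ hu) (fun _ ↦ hv)

theorem exp_mul_smul_cross3_eq_of_central_force {k : ℝ} (c : ℝ → ℝ) {r r' r'' : ℝ → ℝ³}
    (hr : ∀ t, HasDerivAt r (r' t) t) (hr' : ∀ t, HasDerivAt r' (r'' t) t)
    (heq : ∀ t, r'' t = c t • r t - k • r' t) (t : ℝ) :
    exp (k * t) • cross3 (r t) (r' t) = cross3 (r 0) (r' 0) := by
  refine exp_mul_smul_eq_of_hasDerivAt_neg_smul
    (L := fun s ↦ cross3 (r s) (r' s)) (fun s ↦ ((hr s).cross3 (hr' s)).congr_deriv ?_) t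
  simp only [heq s, ← cross3CLM_apply, map_sub, map_smul]
  simp only [cross3CLM_apply, cross3_self, smul_zero, zero_sub, add_zero, neg_smul]

theorem inner_cross3_eq_zero_of_central_force {k : ℝ} (c : ℝ → ℝ) {r r' r'' : ℝ → ℝ³}
    (hr : ∀ t, HasDerivAt r (r' t) t) (hr' : ∀ t, HasDerivAt r' (r'' t) t)
    (heq : ∀ t, r'' t = c t • r t - k • r' t) (t : ℝ) :
    inner ℝ (r t) (cross3 (r 0) (r' 0)) = 0 := by
  rw [← exp_mul_smul_cross3_eq_of_central_force c hr hr' heq t, inner_smul_right,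
    inner_self_cross3, mul_zero]

end CrossProduct

theorem planar_motion_general (γ : ℝ) (V' : ℝ → ℝ)
    (r r' r'' : ℝ → EuclideanSpace ℝ (Fin 3))
    (hr : ∀ t, HasDerivAt r (r' t) t)
    (hr' : ∀ t, HasDerivAt r' (r'' t) t)
    (heq : ∀ t, r'' t = (-(V' ‖r t‖ / ‖r t‖)) • r t - (2 * γ) • r' t) :
    ∀ t : ℝ, inner ℝ (r t) (cross3 (r 0) (r' 0)) = (0 : ℝ) :=
  inner_cross3_eq_zero_of_central_force _ hr hr' heq

/-- For damped motion in a central potential with nonzero initial angular momentum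
`ℓ₀ = r(0) × r'(0)`, the motion stays in the plane through the origin orthogonal to `ℓ₀`. -/
theorem planar_motion (γ : ℝ) (V V' : ℝ → ℝ)
    (hV : ∀ x, HasDerivAt V (V' x) x)
    (r r' r'' : ℝ → EuclideanSpace ℝ (Fin 3))
    (hr : ∀ t, HasDerivAt r (r' t) t)
    (hr' : ∀ t, HasDerivAt r' (r'' t) t)
    (hne : ∀ t, ‖r t‖ ≠ 0)
    (heq : ∀ t, r'' t = (-(V' ‖r t‖ / ‖r t‖)) • r t - (2 * γ) • r' t)
    (hl : cross3 (r 0) (r' 0) ≠ 0) :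
    ∀ t : ℝ, inner ℝ (r t) (cross3 (r 0) (r' 0)) = (0 : ℝ) :=
  planar_motion_general γ V' r r' r'' hr hr' heq
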